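/- arXiv:1608.08247 — 3 statements merged into one kernel-verified Lean document; each statement's English description precedes it below -/
import Mathlib

section
/- Let (Ω, F, P) be a probability space and let A₁, …, Aₙ be events (measurable sets) with n ≥ 2. Then P(A₁ ∪ A₂ ∪ … ∪ Aₙ) ≤ P(A₁) + P(A₂) + … + P(Aₙ) − P(A₁ ∩ A₂ ∩ … ∩ Aₙ). -/
/-!
Fix two distinct indices `i ≠ j` and put `B = ⋃_{k ≠ i} A k`. Then `⋃ A = A i ∪ B` and
`⋂ A ⊆ A i ∩ A j ⊆ A i ∩ B`, so by submodularity of measures and Boole's inequality for `B`,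
`P(⋃ A) + P(⋂ A) ≤ P(A i) + P(B) ≤ ∑ P(A k)`.
-/

open MeasureTheory

section

open Set Finset

variable {α ι : Type*} [MeasurableSpace α]

theorem measure_union_add_inter_le (μ : Measure α) (s t : Set α) :
    μ (s ∪ t) + μ (s ∩ t) ≤ μ s + μ t :=
  calc μ (s ∪ t) + μ (s ∩ t)
      ≤ μ (toMeasurable μ s ∪ t) + μ (toMeasurable μ s ∩ t) := by
        gcongr <;> exact subset_toMeasurable μ s
    _ = μ s + μ t := by
        rw [measure_union_add_inter' (measurableSet_toMeasurable μ s), measure_toMeasurable]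

theorem measure_iUnion_add_measure_iInter_le_sum [Fintype ι] [Nontrivial ι] (μ : Measure α)
    (A : ι → Set α) : μ (⋃ k, A k) + μ (⋂ k, A k) ≤ ∑ k, μ (A k) := by
  classical
  obtain ⟨i, j, hij⟩ := exists_pair_ne ι
  set B := ⋃ k ∈ univ.erase i, A k
  have hUnion : ⋃ k, A k = A i ∪ B := by
    rw [← Finset.set_biUnion_insert, Finset.insert_erase (mem_univ i)]
    simp
  have hInter : ⋂ k, A k ⊆ A i ∩ B := fun x hx =>
    ⟨mem_iInter.1 hx i, mem_biUnion (mem_erase.2 ⟨hij.symm, mem_univ j⟩) (mem_iInter.1 hx j)⟩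
  calc μ (⋃ k, A k) + μ (⋂ k, A k) ≤ μ (A i ∪ B) + μ (A i ∩ B) := by
        rw [hUnion]; gcongr
    _ ≤ μ (A i) + μ B := measure_union_add_inter_le μ _ _
    _ ≤ μ (A i) + ∑ k ∈ univ.erase i, μ (A k) := by gcongr; exact measure_biUnion_finset_le _ _
    _ = ∑ k, μ (A k) := add_sum_erase _ (fun k => μ (A k)) (mem_univ i)

theorem measureReal_iUnion_add_measureReal_iInter_le_sum [Fintype ι] [Nontrivial ι]
    (μ : Measure α) [IsFiniteMeasure μ] (A : ι → Set α) :
    μ.real (⋃ k, A k) + μ.real (⋂ k, A k) ≤ ∑ k, μ.real (A k) := by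
  have h := ENNReal.toReal_mono (ENNReal.sum_ne_top.2 fun k _ => measure_ne_top μ (A k))
    (measure_iUnion_add_measure_iInter_le_sum μ A)
  rwa [ENNReal.toReal_add (measure_ne_top _ _) (measure_ne_top _ _),
    ENNReal.toReal_sum fun k _ => measure_ne_top _ _] at h

end

theorem improved_boole_subtract_once_general {Ω : Type*} [MeasurableSpace Ω]
    (P : Measure Ω) [IsProbabilityMeasure P]
    (n : ℕ) (hn : 2 ≤ n) (A : Fin n → Set Ω) :
    (P (⋃ i, A i)).toReal ≤ ∑ i, (P (A i)).toReal - (P (⋂ i, A i)).toReal := by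
  have : Nontrivial (Fin n) := Fin.nontrivial_iff_two_le.2 hn
  have h := measureReal_iUnion_add_measureReal_iInter_le_sum P A
  simp only [measureReal_def] at h
  linarith

/-- Inequality (3) of the paper: a first tightening of Boole's inequality obtained by
subtracting the probability of the intersection of all events once. -/
theorem improved_boole_subtract_once {Ω : Type*} [MeasurableSpace Ω]
    (P : Measure Ω) [IsProbabilityMeasure P]
    (n : ℕ) (hn : 2 ≤ n) (A : Fin n → Set Ω) (hA : ∀ i, MeasurableSet (A i)) :
    (P (⋃ i, A i)).toReal ≤ ∑ i, (P (A i)).toReal - (P (⋂ i, A i)).toReal :=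
  improved_boole_subtract_once_general P n hn A
end

section
/- Let (Ω, F, P) be a probability space and let A₁, …, Aₙ be events (measurable sets) with n ≥ 2. Then P(A₁ ∪ A₂ ∪ … ∪ Aₙ) ≤ P(A₁) + P(A₂) + … + P(Aₙ) − (n − 1) · P(A₁ ∩ A₂ ∩ … ∩ Aₙ). -/
/-!
Let `I = ⋂ i, A i`. Splitting each `A i` into `I` and `A i \ I` gives
`∑ P(A i) = n P(I) + ∑ P(A i \ I)`, while `⋃ i, A i` is covered by `I` and the sets `A i \ I`,
so `P(⋃ i, A i) ≤ P(I) + ∑ P(A i \ I)`. Subtracting yields the inequality.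
-/

open MeasureTheory

open scoped ENNReal

theorem measure_iUnion_le_sum_sdiff_add {α ι F : Type*} [Fintype ι] [FunLike F (Set α) ℝ≥0∞]
    [OuterMeasureClass F α] (μ : F) (A : ι → Set α) (S : Set α) :
    μ (⋃ i, A i) ≤ ∑ i, μ (A i \ S) + μ S :=
  calc μ (⋃ i, A i) ≤ μ ((⋃ i, A i) ∩ S) + μ ((⋃ i, A i) \ S) := measure_le_inter_add_sdiff _ _ _
    _ ≤ μ S + ∑ i, μ (A i \ S) := by
      gcongr
      · exact Set.inter_subset_right
      · rw [Set.iUnion_sdiff]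
        exact measure_iUnion_fintype_le μ _
    _ = ∑ i, μ (A i \ S) + μ S := add_comm _ _

theorem sum_measure_eq_card_smul_measure_iInter_add {α ι : Type*} [MeasurableSpace α]
    [Fintype ι] (μ : Measure α) (A : ι → Set α) (hI : MeasurableSet (⋂ i, A i)) :
    ∑ i, μ (A i) = Fintype.card ι • μ (⋂ i, A i) + ∑ i, μ (A i \ ⋂ i, A i) := by
  have hsplit i : μ (A i) = μ (⋂ i, A i) + μ (A i \ ⋂ i, A i) := by
    rw [← measure_inter_add_sdiff (A i) hI, Set.inter_eq_right.2 (Set.iInter_subset A i)]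
  simp only [hsplit, Finset.sum_add_distrib, Finset.sum_const, Finset.card_univ]

theorem measure_iUnion_add_card_smul_measure_iInter_le {α ι : Type*} [MeasurableSpace α]
    [Fintype ι] (μ : Measure α) (A : ι → Set α) (hI : MeasurableSet (⋂ i, A i)) :
    μ (⋃ i, A i) + Fintype.card ι • μ (⋂ i, A i) ≤ ∑ i, μ (A i) + μ (⋂ i, A i) := by
  rw [sum_measure_eq_card_smul_measure_iInter_add μ A hI, add_assoc, add_comm (μ _)]
  gcongr
  exact measure_iUnion_le_sum_sdiff_add μ A _

theorem improved_boole_general {Ω : Type*} [MeasurableSpace Ω]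
    (P : Measure Ω) [IsProbabilityMeasure P]
    (n : ℕ) (A : Fin n → Set Ω) (hA : ∀ i, MeasurableSet (A i)) :
    (P (⋃ i, A i)).toReal ≤
      ∑ i, (P (A i)).toReal - ((n : ℝ) - 1) * (P (⋂ i, A i)).toReal := by
  have h := ENNReal.toReal_mono (by simp)
    (measure_iUnion_add_card_smul_measure_iInter_le P A (MeasurableSet.iInter hA))
  rw [ENNReal.toReal_add (measure_ne_top P _) (by simp [ENNReal.mul_eq_top]),
    ENNReal.toReal_add (by simp) (measure_ne_top P _), ENNReal.toReal_nsmul,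
    ENNReal.toReal_sum (fun i _ ↦ measure_ne_top P (A i)), Fintype.card_fin, nsmul_eq_mul] at h
  linarith

/-- Inequality (4) of the paper (the "improved Boole's inequality", Proposition 1):
`P(⋃ i, A i) ≤ ∑ i, P(A i) - (n - 1) * P(⋂ i, A i)`. -/
theorem improved_boole {Ω : Type*} [MeasurableSpace Ω]
    (P : Measure Ω) [IsProbabilityMeasure P]
    (n : ℕ) (hn : 2 ≤ n) (A : Fin n → Set Ω) (hA : ∀ i, MeasurableSet (A i)) :
    (P (⋃ i, A i)).toReal ≤
      ∑ i, (P (A i)).toReal - ((n : ℝ) - 1) * (P (⋂ i, A i)).toReal :=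
  improved_boole_general P n A hA
end

section
/- Let (Ω, F, P) be a probability space and let A₁, …, Aₙ be events (measurable sets) with n ≥ 2. Then P(A₁ ∪ A₂ ∪ … ∪ Aₙ) ≤ P(A₁) + P(A₂) + … + P(Aₙ) − (n − 1) · max(0, P(A₁) + P(A₂) + … + P(Aₙ) − (n − 1)). -/
/-! With `I = P(⋂ i, A i)`, splitting each `A i` along `I` gives the improved Boole
inequality `P(⋃ i, A i) + (n - 1) I ≤ ∑ P(A i)`, and Boole's inequality for the complements
gives Fréchet's bound `∑ P(A i) - (n - 1) ≤ I`. As `n - 1 ≥ 0` and `I ≥ 0`, the second bounds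
the correction term of the first. -/

open MeasureTheory

namespace MeasureTheory

variable {Ω ι : Type*} [MeasurableSpace Ω] {μ : Measure Ω} [IsFiniteMeasure μ] [Fintype ι]
  {A : ι → Set Ω}

-- Both bounds avoid `Fintype.card ι - 1`, so they also hold for empty `ι`.
theorem measureReal_iUnion_add_card_mul_measureReal_iInter_le
    (hA : NullMeasurableSet (⋂ i, A i) μ) :
    μ.real (⋃ i, A i) + Fintype.card ι * μ.real (⋂ i, A i) ≤
      ∑ i, μ.real (A i) + μ.real (⋂ i, A i) := by
  set I := ⋂ i, A i
  have hsplit (i : ι) : μ.real (A i) = μ.real I + μ.real (A i \ I) := by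
    rw [← measureReal_inter_add_sdiff₀ hA,
      Set.inter_eq_self_of_subset_right (Set.iInter_subset A i)]
  have hcover : μ.real (⋃ i, A i) ≤ μ.real I + ∑ i, μ.real (A i \ I) :=
    calc μ.real (⋃ i, A i) ≤ μ.real (I ∪ ⋃ i, A i \ I) := by
          rw [← Set.iUnion_sdiff, Set.union_sdiff_self]
          exact measureReal_mono Set.subset_union_right
      _ ≤ μ.real I + μ.real (⋃ i, A i \ I) := measureReal_union_le _ _
      _ ≤ μ.real I + ∑ i, μ.real (A i \ I) := by gcongr; exact measureReal_iUnion_fintype_le _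
  rw [Finset.sum_congr rfl fun i _ ↦ hsplit i, Finset.sum_add_distrib, Finset.sum_const,
    Finset.card_univ, nsmul_eq_mul]
  linarith

theorem sum_measureReal_add_measureReal_univ_le_measureReal_iInter_add
    (hA : ∀ i, NullMeasurableSet (A i) μ) :
    ∑ i, μ.real (A i) + μ.real Set.univ ≤
      μ.real (⋂ i, A i) + Fintype.card ι * μ.real Set.univ := by
  have hcompl : μ.real (⋂ i, A i)ᶜ ≤ ∑ i, μ.real (A i)ᶜ := by
    rw [Set.compl_iInter]; exact measureReal_iUnion_fintype_le _
  have hInter := measureReal_add_measureReal_compl₀ (NullMeasurableSet.iInter hA)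
  have hsum : ∑ i, (μ.real (A i) + μ.real (A i)ᶜ) = Fintype.card ι * μ.real Set.univ := by
    simp [measureReal_add_measureReal_compl₀ (hA _)]
  rw [Finset.sum_add_distrib] at hsum
  linarith

end MeasureTheory

/-- Inequality (5) of the paper: combining the improved Boole's inequality with
Fréchet's lower bound on `P(⋂ i, A i)`. -/
theorem improved_boole_frechet {Ω : Type*} [MeasurableSpace Ω]
    (P : Measure Ω) [IsProbabilityMeasure P]
    (n : ℕ) (hn : 2 ≤ n) (A : Fin n → Set Ω) (hA : ∀ i, MeasurableSet (A i)) :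
    (P (⋃ i, A i)).toReal ≤
      ∑ i, (P (A i)).toReal -
        ((n : ℝ) - 1) * max 0 (∑ i, (P (A i)).toReal - ((n : ℝ) - 1)) := by
  simp only [← measureReal_def]
  have boole := measureReal_iUnion_add_card_mul_measureReal_iInter_le (μ := P)
    (MeasurableSet.iInter hA).nullMeasurableSet
  have frechet := sum_measureReal_add_measureReal_univ_le_measureReal_iInter_add
    fun i ↦ (hA i).nullMeasurableSet (μ := P)
  simp only [Fintype.card_fin, probReal_univ, mul_one] at boole frechet
  have hn1 : (0 : ℝ) ≤ n - 1 := by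
    rw [sub_nonneg]; exact_mod_cast (by omega : 1 ≤ n)
  have key : ((n : ℝ) - 1) * max 0 (∑ i, P.real (A i) - (n - 1)) ≤
      (n - 1) * P.real (⋂ i, A i) :=
    mul_le_mul_of_nonneg_left (max_le measureReal_nonneg (by linarith)) hn1
  linarith
end
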